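/- Let E₁, E₂ be phase observables with phase matrices (c^{(1)}_{n,m}), (c^{(2)}_{n,m}), let 0 < λ < 1, and suppose c_{n,m} = λ c^{(1)}_{n,m} + (1−λ) c^{(2)}_{n,m} satisfies |c_{n,m}| = 1 for all n, m. Then c_{n,m} = c^{(1)}_{n,m} = c^{(2)}_{n,m} for all n, m. Consequently, any phase observable whose matrix elements all have modulus one (e.g. the canonical phase) is an extreme point of the convex set of phase observables. -/

import Mathlib

open Complex

theorem eq_of_norm_combo_eq {E : Type*} [NormedAddCommGroup E] [NormedSpace ℝ E]
    [StrictConvexSpace ℝ E] {x y : E} {a b r : ℝ} (hx : ‖x‖ ≤ r) (hy : ‖y‖ ≤ r)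
    (ha : 0 < a) (hb : 0 < b) (hab : a + b = 1) (h : ‖a • x + b • y‖ = r) : x = y := by
  by_contra hne
  exact (norm_combo_lt_of_ne hx hy hne ha hb hab).ne h

theorem norm_inner_le_one_of_norm_eq_one {𝕜 H : Type*} [RCLike 𝕜] [NormedAddCommGroup H]
    [InnerProductSpace 𝕜 H] {u v : H} (hu : ‖u‖ = 1) (hv : ‖v‖ = 1) : ‖(inner 𝕜 u v : 𝕜)‖ ≤ 1 :=
  (norm_inner_le_norm u v).trans_eq (by rw [hu, hv, one_mul])

theorem stmt17 {H : Type*} [NormedAddCommGroup H] [InnerProductSpace ℂ H]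
    (ξ₁ ξ₂ : ℕ → H) (hξ₁ : ∀ n, ‖ξ₁ n‖ = 1) (hξ₂ : ∀ n, ‖ξ₂ n‖ = 1)
    (c₁ c₂ c : ℕ → ℕ → ℂ)
    (hc₁ : ∀ n m, c₁ n m = (inner ℂ (ξ₁ n) (ξ₁ m) : ℂ))
    (hc₂ : ∀ n m, c₂ n m = (inner ℂ (ξ₂ n) (ξ₂ m) : ℂ))
    (lam : ℝ) (hlam : 0 < lam) (hlam' : lam < 1)
    (hconv : ∀ n m, c n m = (lam : ℂ) * c₁ n m + ((1 - lam : ℝ) : ℂ) * c₂ n m)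
    (hmod : ∀ n m, ‖c n m‖ = 1) :
    ∀ n m, c n m = c₁ n m ∧ c n m = c₂ n m := by
  intro n m
  have hcombo : c n m = lam • c₁ n m + (1 - lam) • c₂ n m := by
    rw [hconv, real_smul, real_smul]
  have hc₁₂ : c₁ n m = c₂ n m := by
    refine eq_of_norm_combo_eq (r := 1) ?_ ?_ hlam (sub_pos.2 hlam') (add_sub_cancel lam 1) ?_
    · rw [hc₁]; exact norm_inner_le_one_of_norm_eq_one (hξ₁ n) (hξ₁ m)
    · rw [hc₂]; exact norm_inner_le_one_of_norm_eq_one (hξ₂ n) (hξ₂ m)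
    · rw [← hcombo, hmod]
  have hc : c n m = c₁ n m := by
    rw [hcombo, ← hc₁₂, ← add_smul, add_sub_cancel, one_smul]
  exact ⟨hc, hc.trans hc₁₂⟩
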